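/- For any finite nonsolvable group G, there exists a finite non-abelian simple group H with |Solv(H)| ≤ |Solv(G)|. -/

import Mathlib

/-- The solvabilizer of an element `x` of a group `G`:
the set of `y ∈ G` such that `⟨x, y⟩` is solvable. -/
def solvabilizer {G : Type*} [Group G] (x : G) : Set G :=
  {y | IsSolvable ↥(Subgroup.closure {x, y})}

/-- `Solv(G)`, the set of distinct solvabilizers of elements of `G`. -/
def solvSet (G : Type*) [Group G] : Set (Set G) :=
  Set.range fun x : G => solvabilizer x

/-- A non-abelian simple group: a simple group that is not commutative. -/
def IsNonabelianSimple (H : Type*) [Group H] : Prop :=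
  IsSimpleGroup H ∧ ¬ ∀ a b : H, a * b = b * a

/-! If `f : G →* G'` has solvable kernel, a subgroup of `G` is solvable iff its image is, so
`Sol_G(x) = f⁻¹(Sol_G'(f x))`. Taking for `f` the inclusion of a subgroup, or the projection
onto a quotient by a solvable normal subgroup (whose preimage map on sets is injective),
shows that `|Solv|` does not increase from `G` to either. A nonsolvable group that is not simple
has a proper nontrivial normal subgroup `N`, and `N` or `G ⧸ N` is nonsolvable; induction on
`|G|` ends at a nonsolvable, hence non-abelian, simple group. -/

section

variable {G G' : Type*} [Group G] [Group G']

theorem Subgroup.isSolvable_map_iff (f : G →* G') [Group.IsSolvable f.ker] (H : Subgroup G) :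
    Group.IsSolvable (H.map f) ↔ Group.IsSolvable H := by
  have : Group.IsSolvable (f.ker.subgroupOf H) :=
    Group.isSolvable_of_isSolvable_injective (f := H.subtype.subgroupComap f.ker)
      fun a b hab => Subtype.ext <| Subtype.ext <| congrArg (fun z : f.ker => (z : G)) hab
  refine ⟨fun _ => Group.isSolvable_of_ker_le_range (f.ker.subgroupOf H).subtype (f.subgroupMap H)
    (by rw [H.ker_subgroupMap, Subgroup.range_subtype]), fun _ => ?_⟩
  exact Group.isSolvable_of_surjective (f.subgroupMap_surjective H)

theorem solvabilizer_eq_preimage (f : G →* G') [Group.IsSolvable f.ker] (x : G) :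
    solvabilizer x = f ⁻¹' solvabilizer (f x) := by
  ext y
  change _ ↔ Group.IsSolvable (Subgroup.closure {f x, f y})
  rw [← Set.image_pair, ← MonoidHom.map_closure, Subgroup.isSolvable_map_iff]
  rfl

theorem ncard_solvSet_le_of_isSolvable_ker [Finite G'] (f : G →* G') [Group.IsSolvable f.ker] :
    (solvSet G).ncard ≤ (solvSet G').ncard := by
  have : solvSet G ⊆ Set.preimage f '' solvSet G' := by
    rintro _ ⟨x, rfl⟩
    exact ⟨_, ⟨f x, rfl⟩, (solvabilizer_eq_preimage f x).symm⟩
  exact (Set.ncard_le_ncard this (Set.toFinite _)).trans (Set.ncard_image_le (Set.toFinite _))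

theorem ncard_solvSet_le_of_surjective [Finite G] (f : G →* G') [Group.IsSolvable f.ker]
    (hf : Function.Surjective f) : (solvSet G').ncard ≤ (solvSet G).ncard := by
  refine Set.ncard_le_ncard_of_injOn (Set.preimage f) ?_ (Set.preimage_injective.2 hf).injOn
  rintro _ ⟨x', rfl⟩
  obtain ⟨x, rfl⟩ := hf x'
  exact ⟨x, solvabilizer_eq_preimage f x⟩

theorem ncard_solvSet_subgroup_le [Finite G] (K : Subgroup G) :
    (solvSet K).ncard ≤ (solvSet G).ncard :=
  have : Group.IsSolvable K.subtype.ker := by rw [Subgroup.ker_subtype]; infer_instance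
  ncard_solvSet_le_of_isSolvable_ker K.subtype

theorem ncard_solvSet_quotient_le [Finite G] (N : Subgroup G) [N.Normal] [Group.IsSolvable N] :
    (solvSet (G ⧸ N)).ncard ≤ (solvSet G).ncard :=
  have : Group.IsSolvable (QuotientGroup.mk' N).ker := by rwa [QuotientGroup.ker_mk']
  ncard_solvSet_le_of_surjective _ (QuotientGroup.mk'_surjective N)

theorem exists_normal_ne_bot_ne_top [Nontrivial G] (hG : ¬ IsSimpleGroup G) :
    ∃ N : Subgroup G, N.Normal ∧ N ≠ ⊥ ∧ N ≠ ⊤ := by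
  by_contra! h
  exact hG ⟨fun N hN => or_iff_not_imp_left.2 (h N hN)⟩

end

theorem exists_card_lt_not_isSolvable_ncard_solvSet_le {G : Type u} [Group G] [Finite G]
    (hG : ¬ Group.IsSolvable G) (hs : ¬ IsSimpleGroup G) :
    ∃ (G' : Type u) (_ : Group G') (_ : Finite G'), Nat.card G' < Nat.card G ∧
      ¬ Group.IsSolvable G' ∧ (solvSet G').ncard ≤ (solvSet G).ncard := by
  have : Nontrivial G := by
    by_contra h
    have : Subsingleton G := not_nontrivial_iff_subsingleton.1 h
    exact hG inferInstance
  obtain ⟨N, hN, hbot, htop⟩ := exists_normal_ne_bot_ne_top hs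
  by_cases hNs : Group.IsSolvable N
  · refine ⟨G ⧸ N, inferInstance, inferInstance, ?_, ?_, ncard_solvSet_quotient_le N⟩
    · rw [N.card_eq_card_quotient_mul_card_subgroup]
      exact lt_mul_of_one_lt_right Nat.card_pos (N.one_lt_card_iff_ne_bot.2 hbot)
    · exact fun hGN => hG ((Group.isSolvable_iff_subgroup_quotient N).2 ⟨hNs, hGN⟩)
  · exact ⟨N, inferInstance, inferInstance,
      N.card_le_card_group.lt_of_ne (mt N.eq_top_of_card_eq htop), hNs, ncard_solvSet_subgroup_le N⟩

/-- For any finite nonsolvable group `G`, there exists a finite non-abelian simple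
group `H` with `|Solv(H)| ≤ |Solv(G)|`. -/
theorem exists_simple_solvSet_ncard_le {G : Type u} [Group G] [Finite G]
    (hG : ¬ IsSolvable G) :
    ∃ (H : Type u) (instH : Group H) (_ : Finite H),
      @IsNonabelianSimple H instH ∧
        (@solvSet H instH).ncard ≤ (solvSet G).ncard := by
  induction hn : Nat.card G using Nat.strong_induction_on generalizing G with
  | _ n ih =>
    by_cases hs : IsSimpleGroup G
    · exact ⟨G, inferInstance, inferInstance, ⟨hs, mt Group.isSolvable_of_comm hG⟩, le_rfl⟩
    obtain ⟨G', _, _, hcard, hG', hle⟩ := exists_card_lt_not_isSolvable_ncard_solvSet_le hG hs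
    obtain ⟨H, instH, hH, hHsimple, hHG'⟩ := ih _ (hn ▸ hcard) hG' rfl
    exact ⟨H, instH, hH, hHsimple, hHG'.trans hle⟩
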